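/- arXiv:1903.00780 — 2 statements merged into one kernel-verified Lean document; each statement's English description precedes it below -/
import Mathlib

section
/- There exist group base rates ȳ₀, ȳ₁ ∈ (0,1) with ȳ₀ ≠ ȳ₁ such that the per-group-constant predictor f(j) = ȳ_{s(j)} is calibrated within each group (its prediction equals the group mean label), yet for all pairs (j, j') with s(j)=0, s(j')=1, the comparison indicator c(j,j') = 1[f(j) > f(j')] equals 1 whenever ȳ₀ > ȳ₁, and equals 0 with roles reversed; hence the inter-group pairwise accuracies for the two groups are 1 and 0 respectively and are unequal. In other words, calibration per group does not imply inter-group pairwise fairness. -/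
/-- Calibration per group does not imply inter-group pairwise
fairness: there exist base rates `ȳ₀ ≠ ȳ₁` in `(0,1)` such that the per-group
constant predictor `f(j) = ȳ_{s(j)}` is calibrated within each group, yet the
comparison indicator `c(j,j') = 1[f j > f j']` equals 1 for every
group-0-clicked cross pair and 0 for every group-1-clicked cross pair, so the
two inter-group pairwise accuracies are 1 and 0 and are unequal. -/
theorem calibration_insufficient_for_pairwise_fairness :
    ∃ y0 y1 : ℝ, y0 ∈ Set.Ioo (0:ℝ) 1 ∧ y1 ∈ Set.Ioo (0:ℝ) 1 ∧ y0 ≠ y1 ∧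
      ∀ f : Bool → ℝ, (f false = y0 ∧ f true = y1) →
        -- calibration per group: the prediction on each group equals the group mean label
        (f false = y0 ∧ f true = y1) ∧
        -- inter-group accuracy for group 0 (clicked item in group 0) is 1
        ((y0 > y1 → (if f false > f true then (1:ℝ) else 0) = 1
          -- inter-group accuracy for group 1 (clicked item in group 1) is 0
          ∧ (if f true > f false then (1:ℝ) else 0) = 0)
        -- hence the two inter-group pairwise accuracies are unequal
        ∧ (if f false > f true then (1:ℝ) else 0)
            ≠ (if f true > f false then (1:ℝ) else 0)) := by
  refine ⟨3/4, 1/4, ⟨by norm_num, by norm_num⟩, ⟨by norm_num, by norm_num⟩, by norm_num,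
    fun f ⟨h0, h1⟩ => ⟨⟨h0, h1⟩, ?_, ?_⟩⟩ <;> rw [h0, h1] <;> norm_num
end

section
/- There exist ȳ₀, ȳ₁ ∈ (0,1) with ȳ₁ = 1 - ȳ₀ and ȳ₀ > ȳ₁ such that the per-group-constant predictor f(j) = ȳ_{s(j)} achieves equal Bernoulli MSE on both groups, but the inter-group pairwise accuracy is 1 for group 0 and 0 for group 1. Hence equal MSE across groups does not imply pairwise ranking fairness. -/
/-- Equal MSE across groups does not imply pairwise ranking
fairness: there exist `ȳ₀ > ȳ₁` in `(0,1)` with `ȳ₁ = 1 - ȳ₀` such that the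
per-group constant predictor has equal Bernoulli MSE on both groups, yet the
inter-group pairwise accuracy is 1 for group 0 and 0 for group 1. -/
theorem equal_mse_insufficient_for_pairwise_fairness :
    ∃ y0 y1 : ℝ, y0 ∈ Set.Ioo (0:ℝ) 1 ∧ y1 ∈ Set.Ioo (0:ℝ) 1 ∧
      y1 = 1 - y0 ∧ y0 > y1 ∧
      -- equal Bernoulli MSE across groups
      y0 * (1 - y0) ^ 2 + (1 - y0) * y0 ^ 2
        = y1 * (1 - y1) ^ 2 + (1 - y1) * y1 ^ 2 ∧
      -- inter-group pairwise accuracy: 1 for group 0, 0 for group 1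
      (if y0 > y1 then (1:ℝ) else 0) = 1 ∧
      (if y1 > y0 then (1:ℝ) else 0) = 0 := by
  refine ⟨3/4, 1/4, ?_, ?_, ?_, ?_, ?_, ?_, ?_⟩ <;> norm_num
end
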